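/- Let B, R > 0, Θ₀ ∈ (0,1), ε > 0, and let L satisfy L > 6R and L > 4R/ε². For h > 0 and η > 0 define the error term 𝓔_{ε,L}(h,η) = exp(−2S_h(L)/h) + exp(−2d(L−R−4η)/h) + exp(−S_h(L(1+ε))/h) + exp(−(d(L−R−4η) + d(εL+R+2η))/h). Then there exists η₀ > 0 such that for every η ∈ (0, η₀) there exist κ > 0, C > 0 and h₀ > 0 with 𝓔_{ε,L}(h,η) ≤ C·exp(−(1+κ)·S_h(L)/h) for all h ∈ (0, h₀). -/

import Mathlib

/-- The Agmon distance function `d` of the paper, with parameters `B`, `R`. -/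
noncomputable def agmonDist (B R r : ℝ) : ℝ :=
  B / 4 * (r ^ 2 - R ^ 2) - B * R ^ 2 / 2 * Real.log (r / R)

/-- The `h`-dependent tunneling action `S_h` of the paper, with parameters `B`, `R`, `Θ₀`. -/
noncomputable def Sh (B R Θ₀ h ℓ : ℝ) : ℝ :=
  B * ℓ / 4 * Real.sqrt (ℓ ^ 2 - 4 * R ^ 2)
    - (B * R ^ 2 + 2 * Real.sqrt (h * Θ₀ * B * R ^ 2))
      * Real.log ((ℓ + Real.sqrt (ℓ ^ 2 - 4 * R ^ 2)) / (2 * R))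

/-!
As `h → 0`, `S_h(ℓ)` tends to the action `S₀(ℓ)` without the `√h` term, and each of the four
exponents of `𝓔` tends to a limit strictly above `S₀(L)`: to `2 S₀(L)` since `S₀(L) > 0`; to
`S₀(L(1+ε))` since `S₀` is strictly increasing on `[2R, ∞)`, its derivative being
`(B/2)√(ℓ² - 4R²)`; to `2d(L-R-4η)` and `d(L-R-4η) + d(εL+R+2η)`, which for small `η` stay
above `S₀(L)` by elementary estimates from `S₀(L) ≤ BL²/4 - BR² log(L/2R)`, using `L > 6R` and
`ε²L > 4R`. Any `κ > 0` with `(1+κ) S₀(L)` below all four limits then works for small `h`,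
with `C = 4`.
-/

open Real Filter Topology Set

theorem eventually_one_add_mul_lt {α : Type*} {l : Filter α} {s a : α → ℝ} {S A : ℝ}
    (hs : Tendsto s l (𝓝 S)) (ha : Tendsto a l (𝓝 A)) (hSA : S < A) :
    ∀ᶠ κ in 𝓝 (0 : ℝ), ∀ᶠ x in l, (1 + κ) * s x < a x := by
  have h : Tendsto (fun κ : ℝ => (1 + κ) * S) (𝓝 0) (𝓝 S) := by
    simpa using ((tendsto_const_nhds (x := (1 : ℝ))).add (tendsto_id (x := 𝓝 0))).mul_const S
  filter_upwards [h.eventually_lt_const hSA] with κ hκ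
  exact (hs.const_mul (1 + κ)).eventually_lt ha hκ

theorem exists_sum_exp_neg_div_le {ι : Type*} [Fintype ι] {s : ℝ → ℝ} {a : ι → ℝ → ℝ}
    {S : ℝ} {A : ι → ℝ} (hs : Tendsto s (𝓝[>] 0) (𝓝 S))
    (ha : ∀ i, Tendsto (a i) (𝓝[>] 0) (𝓝 (A i))) (hSA : ∀ i, S < A i) :
    ∃ κ > 0, ∃ h₀ > 0, ∀ h ∈ Ioo 0 h₀,
      ∑ i, exp (-a i h / h) ≤ Fintype.card ι * exp (-((1 + κ) * s h) / h) := by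
  have hκ : ∀ᶠ κ in 𝓝[>] 0, 0 < κ ∧ ∀ᶠ h in 𝓝[>] 0, ∀ i, (1 + κ) * s h < a i h := by
    filter_upwards [self_mem_nhdsWithin, nhdsWithin_le_nhds
      (eventually_all.2 fun i => eventually_one_add_mul_lt hs (ha i) (hSA i))] with κ hκ hκ'
    exact ⟨hκ, eventually_all.2 hκ'⟩
  obtain ⟨κ, hκ, hκ'⟩ := hκ.exists
  obtain ⟨h₀, hh₀, hsub⟩ := mem_nhdsGT_iff_exists_Ioo_subset.1 hκ'
  refine ⟨κ, hκ, h₀, hh₀, fun h hh => ?_⟩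
  calc ∑ i, exp (-a i h / h) ≤ ∑ _i : ι, exp (-((1 + κ) * s h) / h) := by
        refine Finset.sum_le_sum fun i _ => ?_
        have := hh.1
        gcongr
        exact (hsub hh i).le
    _ = Fintype.card ι * exp (-((1 + κ) * s h) / h) := by simp

noncomputable def S0 (B R ℓ : ℝ) : ℝ :=
  B * ℓ / 4 * √(ℓ ^ 2 - 4 * R ^ 2) - B * R ^ 2 * log ((ℓ + √(ℓ ^ 2 - 4 * R ^ 2)) / (2 * R))

section Actions

variable {B R : ℝ}

theorem hasDerivAt_S0 (B : ℝ) (hR : 0 < R) {ℓ : ℝ} (hℓ : 2 * R < ℓ) :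
    HasDerivAt (S0 B R) (B / 2 * √(ℓ ^ 2 - 4 * R ^ 2)) ℓ := by
  have hℓ0 : 0 < ℓ := by linarith
  have hpos : 0 < ℓ ^ 2 - 4 * R ^ 2 := by nlinarith
  have hu0 : 0 < √(ℓ ^ 2 - 4 * R ^ 2) := sqrt_pos.2 hpos
  have hu2 : √(ℓ ^ 2 - 4 * R ^ 2) ^ 2 = ℓ ^ 2 - 4 * R ^ 2 := sq_sqrt hpos.le
  have hdu : HasDerivAt (fun x => √(x ^ 2 - 4 * R ^ 2)) (ℓ / √(ℓ ^ 2 - 4 * R ^ 2)) ℓ := by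
    convert ((hasDerivAt_pow 2 ℓ).sub_const (4 * R ^ 2)).sqrt hpos.ne' using 1
    field_simp; simp [mul_comm]
  have hdlog : HasDerivAt (fun x => log ((x + √(x ^ 2 - 4 * R ^ 2)) / (2 * R)))
      (1 / √(ℓ ^ 2 - 4 * R ^ 2)) ℓ := by
    convert (((hasDerivAt_id' ℓ).fun_add hdu).div_const (2 * R)).log
      (by positivity) using 1
    field_simp; ring
  refine (((((hasDerivAt_id' ℓ).const_mul B).div_const 4).fun_mul hdu).fun_sub
    (hdlog.const_mul (B * R ^ 2))).congr_deriv ?_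
  field_simp
  linear_combination (-2 * B) * hu2

theorem S0_two_mul_self (B : ℝ) (hR : R ≠ 0) : S0 B R (2 * R) = 0 := by
  simp [S0, div_self (mul_ne_zero two_ne_zero hR), show (2 * R) ^ 2 - 4 * R ^ 2 = 0 by ring]

theorem continuousOn_S0 (B : ℝ) (hR : 0 < R) : ContinuousOn (S0 B R) (Ici (2 * R)) := by
  refine ContinuousOn.sub (by fun_prop)
    (continuousOn_const.mul (.log (by fun_prop) fun x hx => ?_))
  have : 0 < x := by simp only [mem_Ici] at hx; linarith
  positivity

theorem strictMonoOn_S0 (hB : 0 < B) (hR : 0 < R) : StrictMonoOn (S0 B R) (Ici (2 * R)) := by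
  refine strictMonoOn_of_hasDerivWithinAt_pos (convex_Ici _) (continuousOn_S0 B hR)
    (f' := fun ℓ => B / 2 * √(ℓ ^ 2 - 4 * R ^ 2)) (fun ℓ hℓ => ?_) fun ℓ hℓ => ?_
  all_goals rw [interior_Ici, mem_Ioi] at hℓ
  · exact (hasDerivAt_S0 B hR hℓ).hasDerivWithinAt
  · have : 0 < ℓ ^ 2 - 4 * R ^ 2 := by nlinarith
    positivity

theorem S0_pos (hB : 0 < B) (hR : 0 < R) {ℓ : ℝ} (hℓ : 2 * R < ℓ) : 0 < S0 B R ℓ :=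
  S0_two_mul_self B hR.ne' ▸ strictMonoOn_S0 hB hR self_mem_Ici hℓ.le hℓ

theorem tendsto_Sh_nhds_zero (B R Θ₀ ℓ : ℝ) :
    Tendsto (fun h => Sh B R Θ₀ h ℓ) (𝓝 0) (𝓝 (S0 B R ℓ)) := by
  have : Continuous fun h => Sh B R Θ₀ h ℓ := by unfold Sh; fun_prop
  simpa [Sh, S0] using this.tendsto 0

theorem continuousAt_agmonDist (B : ℝ) (hR : R ≠ 0) {r : ℝ} (hr : r ≠ 0) :
    ContinuousAt (agmonDist B R) r := by
  unfold agmonDist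
  exact ContinuousAt.sub (by fun_prop) (continuousAt_const.mul
    ((continuousAt_id.div_const R).log (div_ne_zero hr hR)))

theorem S0_le_sq_div_four_sub_log (hB : 0 ≤ B) (hR : 0 < R) {ℓ : ℝ} (hℓ : 2 * R ≤ ℓ) :
    S0 B R ℓ ≤ B * ℓ ^ 2 / 4 - B * R ^ 2 * log (ℓ / (2 * R)) := by
  have hℓ0 : 0 < ℓ := by linarith
  have hu : √(ℓ ^ 2 - 4 * R ^ 2) ≤ ℓ := sqrt_le_iff.2 ⟨hℓ0.le, by nlinarith⟩
  have hlog : log (ℓ / (2 * R)) ≤ log ((ℓ + √(ℓ ^ 2 - 4 * R ^ 2)) / (2 * R)) := by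
    gcongr
    exact le_add_of_nonneg_right (sqrt_nonneg _)
  unfold S0
  have := mul_le_mul_of_nonneg_left hu (by positivity : 0 ≤ B * ℓ / 4)
  nlinarith [mul_le_mul_of_nonneg_left hlog (by positivity : 0 ≤ B * R ^ 2)]

theorem S0_lt_two_mul_agmonDist_sub (hB : 0 < B) (hR : 0 < R) {L : ℝ} (hL : 6 * R < L) :
    S0 B R L < 2 * agmonDist B R (L - R) := by
  have hL0 : 0 < L := by linarith
  have hLR : 0 < L - R := by linarith
  have hsplit : log ((L - R) / R) = log (L / (2 * R)) + log (2 * (L - R) / L) := by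
    rw [← log_mul (by positivity) (by positivity)]
    congr 1
    field_simp
  have hlog : log (2 * (L - R) / L) < 1 := by
    refine (log_le_sub_one_of_pos (by positivity)).trans_lt ?_
    rw [sub_lt_iff_lt_add, div_lt_iff₀ hL0]
    linarith
  calc S0 B R L ≤ B * L ^ 2 / 4 - B * R ^ 2 * log (L / (2 * R)) :=
        S0_le_sq_div_four_sub_log hB.le hR (by linarith)
    _ < 2 * agmonDist B R (L - R) := by
      unfold agmonDist
      rw [hsplit]
      nlinarith [mul_lt_mul_of_pos_left hlog (by positivity : 0 < B * R ^ 2),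
        mul_nonneg hB.le (mul_nonneg (by linarith : 0 ≤ L - 6 * R) (by linarith : 0 ≤ L + 2 * R))]

theorem S0_lt_agmonDist_sub_add_agmonDist_add (hB : 0 < B) (hR : 0 < R) {L ε : ℝ}
    (hL : 2 * R ≤ L) (hε : 0 ≤ ε) (hεL : 4 * R < ε ^ 2 * L) :
    S0 B R L < agmonDist B R (L - R) + agmonDist B R (ε * L + R) := by
  have hL0 : 0 < L := by linarith
  have hLR : 0 < L - R := by linarith
  have hlog₁ : log ((L - R) / R) ≤ 2 * log (L / (2 * R)) := by
    calc log ((L - R) / R) ≤ log ((L / (2 * R)) ^ 2) := by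
          refine log_le_log (by positivity) ?_
          rw [div_pow, div_le_div_iff₀ hR (by positivity)]
          nlinarith [sq_nonneg (L - 2 * R)]
      _ = 2 * log (L / (2 * R)) := by rw [log_pow]; norm_num
  have hlog₂ : R * log ((ε * L + R) / R) ≤ ε * L := by
    have := log_le_sub_one_of_pos (by positivity : 0 < (ε * L + R) / R)
    rw [div_sub_one hR.ne', add_sub_cancel_right, le_div_iff₀ hR] at this
    linarith
  calc S0 B R L ≤ B * L ^ 2 / 4 - B * R ^ 2 * log (L / (2 * R)) :=
        S0_le_sq_div_four_sub_log hB.le hR hL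
    _ < agmonDist B R (L - R) + agmonDist B R (ε * L + R) := by
      -- `d(εL + R) ≥ Bε²L²/4 > BRL` pays for what `d(L - R)` lacks
      unfold agmonDist
      nlinarith [mul_le_mul_of_nonneg_left hlog₁ (by positivity : 0 ≤ B * R ^ 2 / 2),
        mul_le_mul_of_nonneg_left hlog₂ (by positivity : 0 ≤ B * R / 2),
        mul_lt_mul_of_pos_left hεL (by positivity : 0 < B * L / 4)]

end Actions

theorem eventually_S0_lt_agmonDist {B R L ε : ℝ} (hB : 0 < B) (hR : 0 < R) (hL : 6 * R < L)
    (hε : 0 ≤ ε) (hεL : 4 * R < ε ^ 2 * L) :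
    ∀ᶠ η in 𝓝 0, S0 B R L < 2 * agmonDist B R (L - R - 4 * η) ∧
      S0 B R L < agmonDist B R (L - R - 4 * η) + agmonDist B R (ε * L + R + 2 * η) := by
  have hd₁ : Tendsto (fun η => agmonDist B R (L - R - 4 * η)) (𝓝 0)
      (𝓝 (agmonDist B R (L - R))) :=
    (continuousAt_agmonDist B hR.ne' (by linarith)).tendsto.comp
      ((by fun_prop : Continuous fun η : ℝ => L - R - 4 * η).tendsto' 0 _ (by simp))
  have hd₂ : Tendsto (fun η => agmonDist B R (ε * L + R + 2 * η)) (𝓝 0)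
      (𝓝 (agmonDist B R (ε * L + R))) :=
    (continuousAt_agmonDist B hR.ne' (by nlinarith)).tendsto.comp
      ((by fun_prop : Continuous fun η : ℝ => ε * L + R + 2 * η).tendsto' 0 _ (by simp))
  exact ((hd₁.const_mul 2).eventually_const_lt (S0_lt_two_mul_agmonDist_sub hB hR hL)).and
    ((hd₁.add hd₂).eventually_const_lt
      (S0_lt_agmonDist_sub_add_agmonDist_add hB hR (by linarith) hε hεL))

theorem error_terms_small_general (B R Θ₀ ε L : ℝ) (hB : 0 < B) (hR : 0 < R)
    (hε : 0 < ε) (hL : 6 * R < L) (hL' : 4 * R / ε ^ 2 < L) :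
    ∃ η₀ > 0, ∀ η ∈ Set.Ioo (0 : ℝ) η₀, ∃ κ > 0, ∃ C > 0, ∃ h₀ > 0,
      ∀ h ∈ Set.Ioo (0 : ℝ) h₀,
        Real.exp (-(2 * Sh B R Θ₀ h L) / h)
          + Real.exp (-(2 * agmonDist B R (L - R - 4 * η)) / h)
          + Real.exp (-(Sh B R Θ₀ h (L * (1 + ε))) / h)
          + Real.exp (-(agmonDist B R (L - R - 4 * η) + agmonDist B R (ε * L + R + 2 * η)) / h)
        ≤ C * Real.exp (-((1 + κ) * Sh B R Θ₀ h L) / h) := by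
  have hεL : 4 * R < ε ^ 2 * L := by rwa [div_lt_iff₀' (by positivity)] at hL'
  obtain ⟨η₀, hη₀, hsub⟩ := mem_nhdsGT_iff_exists_Ioo_subset.1 <|
    nhdsWithin_le_nhds (eventually_S0_lt_agmonDist hB hR hL hε.le hεL)
  refine ⟨η₀, hη₀, fun η hη => ?_⟩
  obtain ⟨h₂, h₄⟩ := hsub hη
  have hSh ℓ := (tendsto_Sh_nhds_zero B R Θ₀ ℓ).mono_left (nhdsWithin_le_nhds (s := Ioi 0))
  obtain ⟨κ, hκ, h₀, hh₀, hsum⟩ := exists_sum_exp_neg_div_le (hSh L)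
    (a := ![fun h => 2 * Sh B R Θ₀ h L, fun _ => 2 * agmonDist B R (L - R - 4 * η),
      fun h => Sh B R Θ₀ h (L * (1 + ε)),
      fun _ => agmonDist B R (L - R - 4 * η) + agmonDist B R (ε * L + R + 2 * η)])
    (A := ![2 * S0 B R L, 2 * agmonDist B R (L - R - 4 * η), S0 B R (L * (1 + ε)),
      agmonDist B R (L - R - 4 * η) + agmonDist B R (ε * L + R + 2 * η)])
    (fun i => by
      fin_cases i
      exacts [(hSh L).const_mul 2, tendsto_const_nhds, hSh _, tendsto_const_nhds])
    (fun i => by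
      fin_cases i
      exacts [show S0 B R L < 2 * S0 B R L by linarith [S0_pos hB hR (by linarith : 2 * R < L)],
        h₂, strictMonoOn_S0 hB hR (mem_Ici.2 (by linarith)) (mem_Ici.2 (by nlinarith))
          (by nlinarith), h₄])
  refine ⟨κ, hκ, 4, by norm_num, h₀, hh₀, fun h hh => ?_⟩
  simpa [Fin.sum_univ_four] using hsum h hh

/-- if `L > 6R` and `L > 4R/ε²`, then there is `η₀ > 0` such that for every
`η ∈ (0, η₀)` there are `κ, C, h₀ > 0` with
`𝓔_{ε,L}(h,η) ≤ C·exp(−(1+κ)S_h(L)/h)` for all `h ∈ (0, h₀)`, where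
`𝓔_{ε,L}(h,η) = e^{−2S_h(L)/h} + e^{−2d(L−R−4η)/h} + e^{−S_h(L(1+ε))/h}
  + e^{−(d(L−R−4η)+d(εL+R+2η))/h}`. -/
theorem error_terms_small (B R Θ₀ ε L : ℝ) (hB : 0 < B) (hR : 0 < R)
    (hΘ : Θ₀ ∈ Set.Ioo (0 : ℝ) 1) (hε : 0 < ε) (hL : 6 * R < L) (hL' : 4 * R / ε ^ 2 < L) :
    ∃ η₀ > 0, ∀ η ∈ Set.Ioo (0 : ℝ) η₀, ∃ κ > 0, ∃ C > 0, ∃ h₀ > 0,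
      ∀ h ∈ Set.Ioo (0 : ℝ) h₀,
        Real.exp (-(2 * Sh B R Θ₀ h L) / h)
          + Real.exp (-(2 * agmonDist B R (L - R - 4 * η)) / h)
          + Real.exp (-(Sh B R Θ₀ h (L * (1 + ε))) / h)
          + Real.exp (-(agmonDist B R (L - R - 4 * η) + agmonDist B R (ε * L + R + 2 * η)) / h)
        ≤ C * Real.exp (-((1 + κ) * Sh B R Θ₀ h L) / h) :=
  error_terms_small_general B R Θ₀ ε L hB hR hε hL hL'
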